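/- The set F_d of d×d factorisable bistochastic matrices is star-shaped with respect to the flat matrix W_d: if B is factorisable, then for every λ ∈ [0,1] the matrix (1−λ)B + λW_d is also factorisable. -/

import Mathlib

/-- A `d × d` real matrix is bistochastic (doubly stochastic) if all its entries are
non-negative and each row and each column sums to `1`. -/
def Bistochastic {d : ℕ} (B : Matrix (Fin d) (Fin d) ℝ) : Prop :=
  (∀ j k, 0 ≤ B j k) ∧ (∀ j, ∑ k, B j k = 1) ∧ (∀ k, ∑ j, B j k = 1)

/-- A bistochastic matrix is bracelet if for every pair of columns `k, l` and every `j₀`,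
`2 √(B j₀ k * B j₀ l) ≤ ∑ j, √(B j k * B j l)` (equivalently, twice the maximum is at most
the sum), and the analogous condition holds for every pair of rows. -/
def Bracelet {d : ℕ} (B : Matrix (Fin d) (Fin d) ℝ) : Prop :=
  Bistochastic B ∧
  (∀ k l j₀ : Fin d, 2 * Real.sqrt (B j₀ k * B j₀ l) ≤ ∑ j, Real.sqrt (B j k * B j l)) ∧
  (∀ j k l₀ : Fin d, 2 * Real.sqrt (B j l₀ * B k l₀) ≤ ∑ l, Real.sqrt (B j l * B k l))

/-- A `d × d` bistochastic matrix `E` is elementary if `E k k = 1` for at least `d - 2`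
indices `k`. -/
def Elementary {d : ℕ} (E : Matrix (Fin d) (Fin d) ℝ) : Prop :=
  Bistochastic E ∧ ∃ S : Finset (Fin d), d - 2 ≤ S.card ∧ ∀ k ∈ S, E k k = 1

/-- The set `F_d` of factorisable bistochastic matrices: the topological closure of the set
of finite products of elementary bistochastic matrices (the identity being the empty
product). -/
def Factorisable {d : ℕ} (B : Matrix (Fin d) (Fin d) ℝ) : Prop :=
  B ∈ closure { M : Matrix (Fin d) (Fin d) ℝ |
    ∃ L : List (Matrix (Fin d) (Fin d) ℝ), (∀ E ∈ L, Elementary E) ∧ M = L.prod }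

/-- The flat (van der Waerden) matrix `W_d` with all entries equal to `1/d`. -/
noncomputable def flatMatrix (d : ℕ) : Matrix (Fin d) (Fin d) ℝ := Matrix.of fun _ _ => (1 : ℝ) / d

/-!
Right multiplication by `C μ = (1 - μ) • 1 + μ • W_d` sends a bistochastic `B` to
`(1 - μ) • B + μ • W_d`, and `F_d` is a closed monoid, so it suffices to show `C λ ∈ F_d`.

Since `∑_{i,j} (1 - P_{ij}) = 2d (1 - W_d)` over the transposition matrices `P_{ij}`, a
Lie–Trotter estimate shows that the product over all ordered pairs of the elementary averages
`(1 - t) • 1 + t • P_{ij}`, `t = μ / 2d`, is `C μ` up to an error `(μ d)²`. Because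
`C μ ^ n = C (1 - (1 - μ) ^ n)`, choosing `(1 - μ) ^ n = 1 - λ` makes the `n`-th power of that
product a product of elementary matrices within `O(1 / n)` of `C λ` when `λ < 1`; the case
`λ = 1` follows by closedness.
-/

open Matrix

section NormedRing

variable {A : Type*} [SeminormedRing A]

theorem norm_list_prod_sub_one_sub_sum_le (L : List A) (hL : ∀ x ∈ L, ‖x‖ ≤ 1) :
    ‖L.prod - (1 - (L.map (1 - ·)).sum)‖ ≤ (L.map (‖1 - ·‖)).sum ^ 2 := by
  induction L with
  | nil => simp
  | cons x L ih =>
    have hx := hL x List.mem_cons_self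
    have ih := ih fun y hy => hL y (List.mem_cons_of_mem _ hy)
    have hS : ‖(L.map (1 - ·)).sum‖ ≤ (L.map (‖1 - ·‖)).sum := by
      simpa [Function.comp_def] using
        norm_multiset_sum_le ((L.map (1 - ·) : List A) : Multiset A)
    simp only [List.prod_cons, List.map_cons, List.sum_cons]
    set S := (L.map (1 - ·)).sum
    set s := (L.map (‖1 - ·‖)).sum
    calc ‖x * L.prod - (1 - (1 - x + S))‖ = ‖x * (L.prod - (1 - S)) + (1 - x) * S‖ := by
          congr 1; noncomm_ring
      _ ≤ ‖x‖ * ‖L.prod - (1 - S)‖ + ‖1 - x‖ * ‖S‖ :=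
          (norm_add_le _ _).trans (add_le_add (norm_mul_le _ _) (norm_mul_le _ _))
      _ ≤ 1 * s ^ 2 + ‖1 - x‖ * s := by gcongr
      _ ≤ (‖1 - x‖ + s) ^ 2 := by nlinarith [norm_nonneg (1 - x), (norm_nonneg _).trans hS]

theorem norm_pow_sub_pow_le [NormOneClass A] {a b : A} (ha : ‖a‖ ≤ 1) (hb : ‖b‖ ≤ 1)
    (n : ℕ) :
    ‖a ^ n - b ^ n‖ ≤ n * ‖a - b‖ := by
  induction n with
  | zero => simp
  | succ n ih =>
    have hbn : ‖b ^ n‖ ≤ 1 := (norm_pow_le b n).trans (pow_le_one₀ (norm_nonneg b) hb)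
    rw [pow_succ', pow_succ', show a * a ^ n - b * b ^ n = a * (a ^ n - b ^ n) + (a - b) * b ^ n by
      noncomm_ring]
    calc _ ≤ ‖a‖ * ‖a ^ n - b ^ n‖ + ‖a - b‖ * ‖b ^ n‖ :=
          (norm_add_le _ _).trans (add_le_add (norm_mul_le _ _) (norm_mul_le _ _))
      _ ≤ 1 * (n * ‖a - b‖) + ‖a - b‖ * 1 := by gcongr
      _ = (n + 1 : ℕ) * ‖a - b‖ := by push_cast; ring

end NormedRing

theorem one_sub_rpow_le {c : ℝ} (hc : 0 < c) (x : ℝ) : 1 - c ^ x ≤ -(Real.log c * x) := by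
  rw [Real.rpow_def_of_pos hc]
  linarith [Real.add_one_le_exp (Real.log c * x)]

section DoublyStochastic

variable {n : Type*} [Fintype n] [DecidableEq n]

theorem isClosed_doublyStochastic : IsClosed (doublyStochastic ℝ n : Set (Matrix n n ℝ)) := by
  have : (doublyStochastic ℝ n : Set (Matrix n n ℝ)) =
      (⋂ i, ⋂ j, {M | 0 ≤ M i j}) ∩ {M | M *ᵥ 1 = 1} ∩ {M | 1 ᵥ* M = 1} := by
    ext M; simp [mem_doublyStochastic, and_assoc]
  rw [this]
  refine ((isClosed_iInter fun i => isClosed_iInter fun j => isClosed_le continuous_const ?_).inter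
    (isClosed_eq ?_ continuous_const)).inter (isClosed_eq ?_ continuous_const) <;> fun_prop

attribute [local instance] Matrix.linftyOpNormedAddCommGroup in
theorem norm_le_one_of_mem_doublyStochastic {M : Matrix n n ℝ}
    (hM : M ∈ doublyStochastic ℝ n) : ‖M‖ ≤ 1 := by
  rw [linfty_opNorm_def, NNReal.coe_le_one]
  refine Finset.sup_le fun i _ => le_of_eq ?_
  rw [← NNReal.coe_inj, NNReal.coe_sum]
  simp [Real.norm_of_nonneg (nonneg_of_mem_doublyStochastic hM), sum_row_of_mem_doublyStochastic hM]

end DoublyStochastic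

section Factorisable

variable {d : ℕ}

theorem bistochastic_iff_mem_doublyStochastic {B : Matrix (Fin d) (Fin d) ℝ} :
    Bistochastic B ↔ B ∈ doublyStochastic ℝ (Fin d) :=
  mem_doublyStochastic_iff_sum.symm

theorem flatMatrix_mem_doublyStochastic : flatMatrix d ∈ doublyStochastic ℝ (Fin d) := by
  refine mem_doublyStochastic_iff_sum.2
    ⟨fun _ _ => by simp [flatMatrix], fun i => ?_, fun j => ?_⟩
  all_goals
    have : (d : ℝ) ≠ 0 := Nat.cast_ne_zero.2 (Fin.pos ‹_›).ne'
    simp [flatMatrix, this]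

theorem mul_flatMatrix_of_mem_doublyStochastic {B : Matrix (Fin d) (Fin d) ℝ}
    (hB : B ∈ doublyStochastic ℝ (Fin d)) : B * flatMatrix d = flatMatrix d := by
  ext i j
  simp [mul_apply, flatMatrix, ← Finset.sum_mul, sum_row_of_mem_doublyStochastic hB]

noncomputable def flatMix (d : ℕ) (μ : ℝ) : Matrix (Fin d) (Fin d) ℝ :=
  (1 - μ) • 1 + μ • flatMatrix d

theorem flatMix_mem_doublyStochastic {μ : ℝ} (hμ : μ ∈ Set.Icc (0 : ℝ) 1) :
    flatMix d μ ∈ doublyStochastic ℝ (Fin d) :=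
  convex_doublyStochastic (one_mem _) flatMatrix_mem_doublyStochastic (by linarith [hμ.2]) hμ.1
    (by ring)

theorem mul_flatMix_of_mem_doublyStochastic {B : Matrix (Fin d) (Fin d) ℝ}
    (hB : B ∈ doublyStochastic ℝ (Fin d)) (μ : ℝ) :
    B * flatMix d μ = (1 - μ) • B + μ • flatMatrix d := by
  rw [flatMix, mul_add, Matrix.mul_smul, Matrix.mul_smul, mul_one,
    mul_flatMatrix_of_mem_doublyStochastic hB]

theorem flatMix_mul_flatMix (a b : ℝ) :
    flatMix d a * flatMix d b = flatMix d (a + b - a * b) := by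
  rw [flatMix, add_mul, Matrix.smul_mul, Matrix.smul_mul, one_mul,
    mul_flatMix_of_mem_doublyStochastic flatMatrix_mem_doublyStochastic]
  simp only [flatMix]
  module

theorem flatMix_pow (μ : ℝ) (n : ℕ) : flatMix d μ ^ n = flatMix d (1 - (1 - μ) ^ n) := by
  induction n with
  | zero => simp [flatMix]
  | succ n ih => rw [pow_succ, ih, flatMix_mul_flatMix]; ring_nf

theorem one_sub_swap_permMatrix (i j : Fin d) :
    1 - (Equiv.swap i j).permMatrix ℝ =
      vecMulVec (Pi.single i 1 - Pi.single j 1) (Pi.single i 1 - Pi.single j 1) := by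
  ext k l
  simp only [Matrix.sub_apply, Matrix.one_apply, vecMulVec_apply, Pi.sub_apply, Pi.single_apply,
    Equiv.Perm.permMatrix, PEquiv.toMatrix_apply, Equiv.toPEquiv_apply, Option.mem_def,
    Option.some.injEq]
  rw [Equiv.swap_apply_def]
  split_ifs <;> grind

theorem sum_one_sub_swap_permMatrix :
    ∑ p : Fin d × Fin d, (1 - (Equiv.swap p.1 p.2).permMatrix ℝ) =
      (2 * d : ℝ) • (1 - flatMatrix d) := by
  ext k l
  have : (d : ℝ) ≠ 0 := Nat.cast_ne_zero.2 k.pos.ne'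
  by_cases hkl : k = l <;>
    simp [hkl, this, one_sub_swap_permMatrix, Matrix.sum_apply, vecMulVec_apply, Pi.single_apply,
      Fintype.sum_prod_type, mul_sub, Finset.sum_sub_distrib, flatMatrix] <;> ring

noncomputable def pairAverage (i j : Fin d) (t : ℝ) : Matrix (Fin d) (Fin d) ℝ :=
  (1 - t) • 1 + t • (Equiv.swap i j).permMatrix ℝ

theorem one_sub_pairAverage (i j : Fin d) (t : ℝ) :
    1 - pairAverage i j t = t • (1 - (Equiv.swap i j).permMatrix ℝ) := by
  rw [pairAverage]; module

theorem pairAverage_mem_doublyStochastic (i j : Fin d) {t : ℝ} (ht : t ∈ Set.Icc (0 : ℝ) 1) :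
    pairAverage i j t ∈ doublyStochastic ℝ (Fin d) :=
  convex_doublyStochastic (one_mem _) permMatrix_mem_doublyStochastic (by linarith [ht.2]) ht.1
    (by ring)

theorem elementary_pairAverage (i j : Fin d) {t : ℝ} (ht : t ∈ Set.Icc (0 : ℝ) 1) :
    Elementary (pairAverage i j t) := by
  refine ⟨bistochastic_iff_mem_doublyStochastic.2 (pairAverage_mem_doublyStochastic i j ht),
    {i, j}ᶜ, ?_, fun k hk => ?_⟩
  · have := Finset.card_le_two (a := i) (b := j)
    rw [Finset.card_compl, Fintype.card_fin]
    omega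
  · simp only [Finset.mem_compl, Finset.mem_insert, Finset.mem_singleton, not_or] at hk
    simp [pairAverage, Equiv.swap_apply_of_ne_of_ne hk.1 hk.2]

noncomputable def pairAverages (d : ℕ) (μ : ℝ) : List (Matrix (Fin d) (Fin d) ℝ) :=
  (Finset.univ : Finset (Fin d × Fin d)).toList.map fun p => pairAverage p.1 p.2 (μ / (2 * d))

theorem div_two_mul_mem_Icc {μ : ℝ} (hμ : μ ∈ Set.Icc (0 : ℝ) 1) (hd : 0 < d) :
    μ / (2 * d) ∈ Set.Icc (0 : ℝ) 1 := by
  have : (1 : ℝ) ≤ d := Nat.one_le_cast.2 hd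
  have := hμ.1
  exact ⟨by positivity, div_le_one_of_le₀ (by linarith [hμ.2]) (by positivity)⟩

theorem elementary_of_mem_pairAverages (hd : 0 < d) {μ : ℝ} (hμ : μ ∈ Set.Icc (0 : ℝ) 1) :
    ∀ E ∈ pairAverages d μ, Elementary E := by
  simp only [pairAverages, List.mem_map]
  rintro _ ⟨p, -, rfl⟩
  exact elementary_pairAverage p.1 p.2 (div_two_mul_mem_Icc hμ hd)

theorem sum_one_sub_pairAverages (hd : 0 < d) (μ : ℝ) :
    ((pairAverages d μ).map (1 - ·)).sum = μ • (1 - flatMatrix d) := by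
  have : (d : ℝ) ≠ 0 := by positivity
  rw [pairAverages, List.map_map, Finset.sum_map_toList, Function.comp_def]
  simp only [one_sub_pairAverage, ← Finset.smul_sum, sum_one_sub_swap_permMatrix, smul_smul]
  congr 1
  field_simp

def factorisableSubmonoid (d : ℕ) : Submonoid (Matrix (Fin d) (Fin d) ℝ) :=
  (Submonoid.closure {E | Elementary E}).topologicalClosure

theorem factorisable_iff_mem_factorisableSubmonoid {B : Matrix (Fin d) (Fin d) ℝ} :
    Factorisable B ↔ B ∈ factorisableSubmonoid d := by
  rw [Factorisable, factorisableSubmonoid, ← SetLike.mem_coe, Submonoid.coe_topologicalClosure,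
    Submonoid.closure_eq_image_prod]
  simp [Set.image, eq_comm]

theorem factorisableSubmonoid_le_doublyStochastic :
    factorisableSubmonoid d ≤ doublyStochastic ℝ (Fin d) :=
  Submonoid.topologicalClosure_minimal _
    (Submonoid.closure_le.2 fun _ hE => bistochastic_iff_mem_doublyStochastic.1 hE.1)
    isClosed_doublyStochastic

theorem prod_pairAverages_mem_factorisableSubmonoid (hd : 0 < d) {μ : ℝ}
    (hμ : μ ∈ Set.Icc (0 : ℝ) 1) : (pairAverages d μ).prod ∈ factorisableSubmonoid d :=
  Submonoid.le_topologicalClosure _ <| Submonoid.list_prod_mem _ fun E hE =>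
    Submonoid.subset_closure (elementary_of_mem_pairAverages hd hμ E hE)

section linftyOpNorm

attribute [local instance] Matrix.linftyOpNormedAddCommGroup Matrix.linftyOpNormedRing
  Matrix.linftyOpNormedSpace

theorem norm_one_sub_pairAverage_le (i j : Fin d) {t : ℝ} (ht : 0 ≤ t) :
    ‖1 - pairAverage i j t‖ ≤ 2 * t := by
  rw [one_sub_pairAverage, norm_smul, Real.norm_of_nonneg ht, mul_comm]
  gcongr
  calc ‖1 - (Equiv.swap i j).permMatrix ℝ‖
      ≤ ‖(1 : Matrix (Fin d) (Fin d) ℝ)‖ + ‖(Equiv.swap i j).permMatrix ℝ‖ :=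
        norm_sub_le _ _
    _ ≤ 1 + 1 := add_le_add (norm_le_one_of_mem_doublyStochastic (one_mem _))
        (norm_le_one_of_mem_doublyStochastic permMatrix_mem_doublyStochastic)
    _ = 2 := one_add_one_eq_two

theorem sum_norm_one_sub_pairAverages_le (hd : 0 < d) {μ : ℝ} (hμ : 0 ≤ μ) :
    ((pairAverages d μ).map (‖1 - ·‖)).sum ≤ μ * d := by
  have : (d : ℝ) ≠ 0 := by positivity
  rw [pairAverages, List.map_map, Finset.sum_map_toList, Function.comp_def]
  calc ∑ p : Fin d × Fin d, ‖1 - pairAverage p.1 p.2 (μ / (2 * d))‖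
      ≤ ∑ _p : Fin d × Fin d, 2 * (μ / (2 * d)) :=
        Finset.sum_le_sum fun p _ => norm_one_sub_pairAverage_le p.1 p.2 (by positivity)
    _ = μ * d := by
        simp only [Finset.sum_const, Finset.card_univ, Fintype.card_prod, Fintype.card_fin,
          nsmul_eq_mul, Nat.cast_mul]
        field_simp

theorem norm_prod_pairAverages_sub_flatMix_le (hd : 0 < d) {μ : ℝ}
    (hμ : μ ∈ Set.Icc (0 : ℝ) 1) :
    ‖(pairAverages d μ).prod - flatMix d μ‖ ≤ (μ * d) ^ 2 := by
  have h := norm_list_prod_sub_one_sub_sum_le (pairAverages d μ) fun E hE =>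
    norm_le_one_of_mem_doublyStochastic
      (bistochastic_iff_mem_doublyStochastic.1 (elementary_of_mem_pairAverages hd hμ E hE).1)
  rw [sum_one_sub_pairAverages hd, show 1 - μ • (1 - flatMatrix d) = flatMix d μ by
    rw [flatMix]; module] at h
  exact h.trans <|
    pow_le_pow_left₀ (List.sum_nonneg (by simp)) (sum_norm_one_sub_pairAverages_le hd hμ.1) 2

theorem flatMix_mem_factorisableSubmonoid_of_lt_one (hd : 0 < d) {l : ℝ} (hl₀ : 0 ≤ l)
    (hl₁ : l < 1) : flatMix d l ∈ factorisableSubmonoid d := by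
  have : Nonempty (Fin d) := ⟨⟨0, hd⟩⟩
  set c := 1 - l
  have hc : 0 < c := by linarith
  set μ : ℕ → ℝ := fun n => 1 - c ^ (n⁻¹ : ℝ)
  have hμ (n : ℕ) : μ n ∈ Set.Icc (0 : ℝ) 1 :=
    ⟨sub_nonneg.2 (Real.rpow_le_one hc.le (by linarith) (by positivity)),
      sub_le_self _ (by positivity)⟩
  have hμ_le (n : ℕ) : μ n ≤ -Real.log c / n := (one_sub_rpow_le hc _).trans_eq (by ring)
  have hpow {n : ℕ} (hn : n ≠ 0) : flatMix d (μ n) ^ n = flatMix d l := by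
    rw [flatMix_pow, sub_sub_cancel, Real.rpow_inv_natCast_pow hc.le hn, sub_sub_cancel]
  have hdist {n : ℕ} (hn : 1 ≤ n) :
      ‖(pairAverages d (μ n)).prod ^ n - flatMix d l‖ ≤ (Real.log c * d) ^ 2 / n := by
    calc ‖(pairAverages d (μ n)).prod ^ n - flatMix d l‖
        = ‖(pairAverages d (μ n)).prod ^ n - flatMix d (μ n) ^ n‖ := by rw [hpow (by omega)]
      _ ≤ n * ‖(pairAverages d (μ n)).prod - flatMix d (μ n)‖ :=
        norm_pow_sub_pow_le
          (norm_le_one_of_mem_doublyStochastic (factorisableSubmonoid_le_doublyStochastic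
            (prod_pairAverages_mem_factorisableSubmonoid hd (hμ n))))
          (norm_le_one_of_mem_doublyStochastic (flatMix_mem_doublyStochastic (hμ n))) n
      _ ≤ n * (-Real.log c / n * d) ^ 2 := by
        gcongr
        exact (norm_prod_pairAverages_sub_flatMix_le hd (hμ n)).trans
          (pow_le_pow_left₀ (mul_nonneg (hμ n).1 d.cast_nonneg)
            (mul_le_mul_of_nonneg_right (hμ_le n) d.cast_nonneg) 2)
      _ = (Real.log c * d) ^ 2 / n := by field_simp
  refine (Submonoid.isClosed_topologicalClosure _).mem_of_tendsto
    (tendsto_iff_norm_sub_tendsto_zero.2 <| squeeze_zero' (.of_forall fun _ => norm_nonneg _)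
      ((Filter.eventually_ge_atTop 1).mono fun _ => hdist)
      (tendsto_const_div_atTop_nhds_zero_nat _))
    (.of_forall fun n => pow_mem (prod_pairAverages_mem_factorisableSubmonoid hd (hμ n)) n)

end linftyOpNorm

theorem flatMix_mem_factorisableSubmonoid {l : ℝ} (hl : l ∈ Set.Icc (0 : ℝ) 1) :
    flatMix d l ∈ factorisableSubmonoid d := by
  obtain rfl | hd := d.eq_zero_or_pos
  · exact Subsingleton.elim 1 (flatMix 0 l) ▸ one_mem _
  have hclosed : IsClosed (flatMix d ⁻¹' factorisableSubmonoid d) :=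
    (Submonoid.isClosed_topologicalClosure _).preimage (by unfold flatMix; fun_prop)
  rw [← closure_Ico zero_ne_one] at hl
  exact closure_minimal (fun _ hμ => flatMix_mem_factorisableSubmonoid_of_lt_one hd hμ.1 hμ.2)
    hclosed hl

end Factorisable

/-- The set of factorisable bistochastic matrices is star-shaped with respect to the flat
matrix `W_d`: if `B` is factorisable, then for every `λ ∈ [0,1]`, `(1-λ) B + λ W_d` is
also factorisable. -/
theorem factorisable_starShaped {d : ℕ} (B : Matrix (Fin d) (Fin d) ℝ)
    (hB : Factorisable B) (lam : ℝ) (hlam : lam ∈ Set.Icc (0 : ℝ) 1) :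
    Factorisable ((1 - lam) • B + lam • flatMatrix d) := by
  rw [factorisable_iff_mem_factorisableSubmonoid] at hB ⊢
  rw [← mul_flatMix_of_mem_doublyStochastic (factorisableSubmonoid_le_doublyStochastic hB)]
  exact mul_mem hB (flatMix_mem_factorisableSubmonoid hlam)
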